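/- arXiv:2107.07623 — 4 statements merged into one kernel-verified Lean document; each statement's English description precedes it below -/
import Mathlib

section
/- For any two independent Poisson random variables c and c' with parameter λ, the expectation of the sum over k from 0 to min(c,c') of π_{λs}(k)·π_{λ(1-s)}(c−k)·π_{λ(1-s)}(c'−k)/(π_λ(c)·π_λ(c')) equals 1, where π_μ(k) = e^{−μ} μ^k / k!. -/
/-! Cancelling the weights `π_λ(c) π_λ(c')` leaves `∑_{c,c'} ∑_{k ≤ min(c,c')} a_k b_{c-k} b_{c'-k}`
with `a = π_{λs}` and `b = π_{λ(1-s)}`. Summing first over `c' ≥ k` uses up one factor `∑ b = 1`,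
and what remains is the Cauchy product of `∑ a = 1` and `∑ b = 1`. -/

/-- Poisson pmf with parameter `μ`. -/
noncomputable def poissonPMF (μ : ℝ) (k : ℕ) : ℝ :=
  Real.exp (-μ) * μ ^ k / (Nat.factorial k)

open Finset

theorem HasSum.ite_le_sub {M : Type*} [AddCommMonoid M] [TopologicalSpace M] {b : ℕ → M} {B : M}
    (hb : HasSum b B) (k : ℕ) :
    HasSum (fun n ↦ if k ≤ n then b (n - k) else 0) B := by
  refine (Function.Injective.hasSum_iff (g := (· + k)) (add_left_injective k) ?_).mp ?_
  · rintro n hn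
    rw [if_neg]
    rintro hkn
    exact hn ⟨n - k, Nat.sub_add_cancel hkn⟩
  · simpa [Function.comp_def] using hb

theorem HasSum.sum_range_min_mul_sub {R : Type*} [NonUnitalNonAssocSemiring R]
    [TopologicalSpace R] [IsTopologicalSemiring R] {b : ℕ → R} {B : R} (hb : HasSum b B)
    (f : ℕ → R) (c : ℕ) :
    HasSum (fun n ↦ ∑ k ∈ range (min c n + 1), f k * b (n - k))
      ((∑ k ∈ range (c + 1), f k) * B) := by
  have hrange (n : ℕ) : ∑ k ∈ range (min c n + 1), f k * b (n - k) =
      ∑ k ∈ range (c + 1), f k * if k ≤ n then b (n - k) else 0 := by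
    simp only [mul_ite, mul_zero, ← sum_filter]
    congr 1
    ext k
    simp
  simp only [hrange, sum_mul]
  exact hasSum_sum fun k _ ↦ (hb.ite_le_sub k).mul_left (f k)

theorem hasSum_poissonPMF (μ : ℝ) : HasSum (poissonPMF μ) 1 := by
  have h := (NormedSpace.expSeries_div_hasSum_exp μ).mul_left (Real.exp (-μ))
  rw [← Real.exp_eq_exp_ℝ, ← Real.exp_add, neg_add_cancel, Real.exp_zero] at h
  simp only [← mul_div_assoc] at h
  exact h

theorem summable_norm_poissonPMF (μ : ℝ) : Summable fun n ↦ ‖poissonPMF μ n‖ := by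
  simpa [poissonPMF, abs_mul, abs_div, abs_pow, mul_div_assoc] using
    (Real.summable_pow_div_factorial |μ|).mul_left (Real.exp (-μ))

theorem poissonPMF_ne_zero {μ : ℝ} (hμ : μ ≠ 0) (n : ℕ) : poissonPMF μ n ≠ 0 := by
  unfold poissonPMF
  positivity

theorem stmt_0_general (lam s : ℝ) (hlam : 0 < lam) :
    ∑' c : ℕ, ∑' c' : ℕ, poissonPMF lam c * poissonPMF lam c' *
      (∑ k ∈ Finset.range (min c c' + 1),
        poissonPMF (lam * s) k * poissonPMF (lam * (1 - s)) (c - k) *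
          poissonPMF (lam * (1 - s)) (c' - k) / (poissonPMF lam c * poissonPMF lam c')) = 1 := by
  set a := poissonPMF (lam * s)
  set b := poissonPMF (lam * (1 - s))
  have hcancel (c c' : ℕ) : poissonPMF lam c * poissonPMF lam c' *
      (∑ k ∈ range (min c c' + 1), a k * b (c - k) * b (c' - k) /
        (poissonPMF lam c * poissonPMF lam c')) =
      ∑ k ∈ range (min c c' + 1), a k * b (c - k) * b (c' - k) := by
    rw [← sum_div, mul_div_cancel₀]
    exact mul_ne_zero (poissonPMF_ne_zero hlam.ne' c) (poissonPMF_ne_zero hlam.ne' c')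
  calc _ = ∑' c, ∑ k ∈ range (c + 1), a k * b (c - k) := by
        refine tsum_congr fun c ↦ ?_
        simpa [hcancel] using ((hasSum_poissonPMF _).sum_range_min_mul_sub _ c).tsum_eq
    _ = (∑' n, a n) * ∑' n, b n :=
        (tsum_mul_tsum_eq_tsum_sum_range_of_summable_norm
          (summable_norm_poissonPMF _) (summable_norm_poissonPMF _)).symm
    _ = 1 := by rw [(hasSum_poissonPMF _).tsum_eq, (hasSum_poissonPMF _).tsum_eq, one_mul]

/-- For independent Poisson(λ) variables c, c', the expectation of
`∑_{k=0}^{min(c,c')} π_{λs}(k) π_{λ(1-s)}(c-k) π_{λ(1-s)}(c'-k) / (π_λ(c) π_λ(c'))` equals 1. -/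
theorem stmt_0 (lam s : ℝ) (hlam : 0 < lam) (hs : s ∈ Set.Icc (0:ℝ) 1) :
    ∑' c : ℕ, ∑' c' : ℕ, poissonPMF lam c * poissonPMF lam c' *
      (∑ k ∈ Finset.range (min c c' + 1),
        poissonPMF (lam * s) k * poissonPMF (lam * (1 - s)) (c - k) *
          poissonPMF (lam * (1 - s)) (c' - k) / (poissonPMF lam c * poissonPMF lam c')) = 1 :=
  stmt_0_general lam s hlam
end

section
/- Let P₀ be a probability measure, (F_n) a filtration, and (L_n) a nonnegative (F_n)-martingale under P₀ with E₀[L_n] = 1 for all n, converging almost surely to L_∞. If E₀[L_∞] < 1, then for every a > 0 that is a continuity point of the law of L_∞, it holds that liminf_n P₁(L_n > a) ≥ 1 − E₀[L_∞], where P₁ is defined on each F_n by dP₁/dP₀|_{F_n} = L_n. -/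
open MeasureTheory Filter

/-- If a nonnegative unit-mean martingale `L` converges a.s. to `L∞` with `E₀[L∞] < 1`,
then for every continuity point `a > 0` of the law of `L∞`,
`liminf_n P₁(L_n > a) ≥ 1 - E₀[L∞]`, where `dP₁/dP₀|_{F_n} = L_n`. -/
theorem stmt_3 {Ω : Type*} {m0 : MeasurableSpace Ω} (P0 : Measure Ω) [IsProbabilityMeasure P0]
    (ℱ : Filtration ℕ m0) (L : ℕ → Ω → ℝ) (Linf : Ω → ℝ)
    (hmart : Martingale L ℱ P0) (hpos : ∀ n ω, 0 ≤ L n ω)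
    (hmean : ∀ n, ∫ ω, L n ω ∂P0 = 1)
    (hconv : ∀ᵐ ω ∂P0, Tendsto (fun n => L n ω) atTop (nhds (Linf ω)))
    (hLinfInt : Integrable Linf P0)
    (hloss : ∫ ω, Linf ω ∂P0 < 1)
    (a : ℝ) (ha : 0 < a) (hcont : P0 {ω | Linf ω = a} = 0) :
    1 - ∫ ω, Linf ω ∂P0 ≤
      atTop.liminf (fun n =>
        ((P0.withDensity (fun ω => ENNReal.ofReal (L n ω))) {ω | a < L n ω}).toReal) := by
  classical
  have hLmeas : ∀ n, Measurable (L n) := fun n =>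
    ((hmart.stronglyMeasurable n).mono (ℱ.le n)).measurable
  have hLint : ∀ n, Integrable (L n) P0 := fun n => hmart.integrable n
  set g : ℕ → Ω → ℝ := fun n ω => if L n ω ≤ a then L n ω else 0 with hgdef
  set G : Ω → ℝ := fun ω => if Linf ω ≤ a then Linf ω else 0 with hGdef
  have hSmeas : ∀ n, MeasurableSet {ω | a < L n ω} := fun n =>
    measurableSet_lt measurable_const (hLmeas n)
  -- rewrite each term of the liminf
  have hterm : ∀ n,
      ((P0.withDensity (fun ω => ENNReal.ofReal (L n ω))) {ω | a < L n ω}).toReal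
        = 1 - ∫ ω, g n ω ∂P0 := by
    intro n
    rw [withDensity_apply _ (hSmeas n),
      ← ofReal_integral_eq_lintegral_ofReal ((hLint n).restrict)
        (Filter.Eventually.of_forall fun ω => hpos n ω),
      ENNReal.toReal_ofReal (setIntegral_nonneg (hSmeas n) fun ω _ => hpos n ω)]
    have hcompl : {ω | a < L n ω}ᶜ = {ω | L n ω ≤ a} := by
      ext ω; simp [not_lt]
    have hsum := integral_add_compl (hSmeas n) (hLint n)
    rw [hmean n, hcompl] at hsum
    have hgi : ∫ ω, g n ω ∂P0 = ∫ ω in {ω | L n ω ≤ a}, L n ω ∂P0 := by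
      rw [← integral_indicator (measurableSet_le (hLmeas n) measurable_const)]
      refine integral_congr_ae (Filter.Eventually.of_forall fun ω => ?_)
      simp [hgdef, Set.indicator_apply]
    linarith [hgi ▸ hsum]
  simp only [hterm]
  -- a.e. facts
  have hne : ∀ᵐ ω ∂P0, Linf ω ≠ a := by
    rw [ae_iff]; simpa using hcont
  have hLinfnn : ∀ᵐ ω ∂P0, 0 ≤ Linf ω := by
    filter_upwards [hconv] with ω hω
    exact ge_of_tendsto' hω fun n => hpos n ω
  -- pointwise convergence
  have hlim : ∀ᵐ ω ∂P0, Tendsto (fun n => g n ω) atTop (nhds (G ω)) := by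
    filter_upwards [hconv, hne] with ω hω hωa
    rcases lt_or_gt_of_ne hωa with h | h
    · have hev : ∀ᶠ n in atTop, L n ω < a := hω.eventually_lt_const h
      have heq : (fun n => L n ω) =ᶠ[atTop] fun n => g n ω :=
        hev.mono fun n hn => by simp [hgdef, hn.le]
      have : G ω = Linf ω := by simp [hGdef, h.le]
      rw [this]
      exact hω.congr' heq
    · have hev : ∀ᶠ n in atTop, a < L n ω := hω.eventually_const_lt h
      have heq : (fun _ : ℕ => (0 : ℝ)) =ᶠ[atTop] fun n => g n ω :=
        hev.mono fun n hn => by simp [hgdef, not_le.mpr hn]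
      have : G ω = 0 := by simp [hGdef, not_le.mpr h]
      rw [this]
      exact tendsto_const_nhds.congr' heq
  have hgmeas : ∀ n, AEStronglyMeasurable (g n) P0 := fun n =>
    (Measurable.ite (measurableSet_le (hLmeas n) measurable_const) (hLmeas n)
      measurable_const).aestronglyMeasurable
  have hbound : ∀ n, ∀ᵐ ω ∂P0, ‖g n ω‖ ≤ a := by
    intro n
    refine Filter.Eventually.of_forall fun ω => ?_
    by_cases h : L n ω ≤ a
    · simp only [hgdef, if_pos h]
      rw [Real.norm_eq_abs, abs_of_nonneg (hpos n ω)]; exact h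
    · simp only [hgdef, if_neg h]
      simpa using ha.le
  have htend : Tendsto (fun n => ∫ ω, g n ω ∂P0) atTop (nhds (∫ ω, G ω ∂P0)) :=
    tendsto_integral_of_dominated_convergence (fun _ => a) hgmeas
      (integrable_const a) hbound hlim
  have hGmeas : AEStronglyMeasurable G P0 :=
    aestronglyMeasurable_of_tendsto_ae atTop hgmeas hlim
  have hGint : Integrable G P0 :=
    Integrable.mono' (integrable_const a) hGmeas
      (by
        filter_upwards [hLinfnn] with ω hω
        by_cases h : Linf ω ≤ a
        · simp only [hGdef, if_pos h]
          rw [Real.norm_eq_abs, abs_of_nonneg hω]; exact h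
        · simp only [hGdef, if_neg h]; simpa using ha.le)
  have hGle : ∫ ω, G ω ∂P0 ≤ ∫ ω, Linf ω ∂P0 := by
    refine integral_mono_ae hGint hLinfInt ?_
    filter_upwards [hLinfnn] with ω hω
    by_cases h : Linf ω ≤ a
    · simp [hGdef, h]
    · simp only [hGdef, if_neg h]; exact hω
  have hfinal : Tendsto (fun n => 1 - ∫ ω, g n ω ∂P0) atTop
      (nhds (1 - ∫ ω, G ω ∂P0)) := tendsto_const_nhds.sub htend
  rw [hfinal.liminf_eq]
  linarith
end

section
/- Define f(x) = (1/(1−sx))·exp(κ(1−s)(x−1)/(1−sx)) for 0 ≤ sx < 1, where κ = λs². Then f admits the series representation f(x) = Σ_{c,Δ≥0} e^{−λ(1−s)} s^c (λ(1−s)²)^Δ/Δ! · Σ_{k=0}^{c} C(c,k)·C(Δ,c−k)·x^k, where C denotes the binomial coefficient. -/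
/-!
With `μ = λ(1-s)²`, `t = sx` and `u = sμ` the exponent is `-λ(1-s) + μ + u/(1-t)`, so the
left side is `e^{-λ(1-s)} e^μ (1-t)⁻¹ exp (u/(1-t))`. Expanding the exponential in `u/(1-t)`
and then each `(1-t)^{-(j+1)}` by the negative binomial series writes this as
`∑ C(k+j,j) t^k u^j/j!`, which is absolutely summable for `|t| < 1`; grouping by `c = j + k`
gives the outer series. The inner series over `Δ` collapses by
`∑_Δ C(Δ,m) μ^Δ/Δ! = μ^m/m! · e^μ`.
-/

open Finset
open scoped Nat

theorem HasSum.sum_antidiagonal {α : Type*} [AddCommMonoid α] [TopologicalSpace α]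
    [ContinuousAdd α] [RegularSpace α] {f : ℕ × ℕ → α} {a : α} (hf : HasSum f a) :
    HasSum (fun n ↦ ∑ p ∈ antidiagonal n, f p) a :=
  (HasAntidiagonal.sigmaAntidiagonalEquivProd.hasSum_iff.2 hf).sigma fun n ↦ by
    rw [← Finset.sum_coe_sort]
    exact hasSum_fintype _

theorem Real.hasSum_pow_div_factorial (x : ℝ) : HasSum (fun n : ℕ ↦ x ^ n / n !) (exp x) := by
  rw [exp_eq_exp_ℝ]
  exact NormedSpace.expSeries_div_hasSum_exp x

theorem Real.hasSum_choose_mul_pow_div_factorial (x : ℝ) (m : ℕ) :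
    HasSum (fun n : ℕ ↦ (n.choose m : ℝ) * x ^ n / n !) (x ^ m / m ! * exp x) := by
  have hshift : ∀ j : ℕ, ((j + m).choose m : ℝ) * x ^ (j + m) / (j + m)! =
      x ^ m / m ! * (x ^ j / j !) := by
    intro j
    rw [add_comm j m, Nat.cast_add_choose, pow_add]
    field_simp
  refine (hasSum_nat_add_iff' m).1 ?_
  rw [sum_eq_zero fun n hn ↦ by rw [Nat.choose_eq_zero_of_lt (mem_range.1 hn)]; simp, sub_zero]
  simpa only [hshift] using (hasSum_pow_div_factorial x).mul_left (x ^ m / m !)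

theorem hasSum_choose_mul_pow_div_one_sub_pow (u : ℝ) {t : ℝ} (ht : ‖t‖ < 1) (j : ℕ) :
    HasSum (fun k : ℕ ↦ ((k + j).choose j : ℝ) * t ^ k * (u ^ j / j !))
      (u ^ j / j ! / (1 - t) ^ (j + 1)) := by
  simpa only [div_eq_mul_one_div (u ^ j / j !), mul_comm (u ^ j / j !)] using
    (hasSum_choose_mul_geometric_of_norm_lt_one j ht).mul_right (u ^ j / j !)

theorem hasSum_pow_div_factorial_div_one_sub_pow (u : ℝ) {t : ℝ} (ht : t ≠ 1) :
    HasSum (fun j : ℕ ↦ u ^ j / j ! / (1 - t) ^ (j + 1))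
      ((1 - t)⁻¹ * Real.exp (u / (1 - t))) := by
  have h : 1 - t ≠ 0 := sub_ne_zero.2 ht.symm
  have hterm : ∀ j : ℕ,
      u ^ j / j ! / (1 - t) ^ (j + 1) = (1 - t)⁻¹ * ((u / (1 - t)) ^ j / j !) := by
    intro j
    rw [div_pow, pow_succ]
    field_simp
  simpa only [hterm] using (Real.hasSum_pow_div_factorial (u / (1 - t))).mul_left (1 - t)⁻¹

theorem hasSum_choose_mul_pow_mul_pow_div_factorial {t : ℝ} (ht : ‖t‖ < 1) (u : ℝ) :
    HasSum (fun p : ℕ × ℕ ↦ ((p.2 + p.1).choose p.1 : ℝ) * t ^ p.2 * (u ^ p.1 / p.1 !))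
      ((1 - t)⁻¹ * Real.exp (u / (1 - t))) := by
  have ht1 : ∀ {t : ℝ}, ‖t‖ < 1 → t ≠ 1 := fun ht h ↦ by simp [h] at ht
  have habs : ‖|t|‖ < 1 := by rwa [Real.norm_eq_abs, abs_abs]
  have hsum :
      Summable fun p : ℕ × ℕ ↦ ((p.2 + p.1).choose p.1 : ℝ) * t ^ p.2 * (u ^ p.1 / p.1 !) := by
    refine Summable.of_norm ?_
    simp only [norm_mul, norm_div, norm_pow, Real.norm_eq_abs, Nat.abs_cast]
    rw [summable_prod_of_nonneg fun p ↦ by positivity]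
    refine ⟨fun j ↦ (hasSum_choose_mul_pow_div_one_sub_pow |u| habs j).summable, ?_⟩
    exact (hasSum_pow_div_factorial_div_one_sub_pow |u| (ht1 habs)).summable.congr fun j ↦
      (hasSum_choose_mul_pow_div_one_sub_pow |u| habs j).tsum_eq.symm
  have hfib := hsum.hasSum.prod_fiberwise (hasSum_choose_mul_pow_div_one_sub_pow u ht)
  rw [← hfib.unique (hasSum_pow_div_factorial_div_one_sub_pow u (ht1 ht))]
  exact hsum.hasSum

theorem hasSum_sum_choose_mul_pow_mul_pow_div_factorial {t : ℝ} (ht : ‖t‖ < 1) (u : ℝ) :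
    HasSum (fun c : ℕ ↦
        ∑ k ∈ range (c + 1), (c.choose k : ℝ) * t ^ k * (u ^ (c - k) / (c - k)!))
      ((1 - t)⁻¹ * Real.exp (u / (1 - t))) := by
  refine (hasSum_choose_mul_pow_mul_pow_div_factorial ht u).sum_antidiagonal.congr_fun fun c ↦ ?_
  rw [← Nat.sum_antidiagonal_swap]
  simp only [Prod.fst_swap, Prod.snd_swap]
  rw [Nat.sum_antidiagonal_eq_sum_range_succ
    fun k j ↦ ((k + j).choose j : ℝ) * t ^ k * (u ^ j / j !)]
  refine sum_congr rfl fun k hk ↦ ?_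
  have hkc : k ≤ c := Nat.lt_succ_iff.1 (mem_range.1 hk)
  rw [Nat.add_sub_of_le hkc, Nat.choose_symm hkc]

theorem hasSum_pow_mul_pow_div_factorial_mul_sum_choose_mul_choose (s μ x : ℝ) (c : ℕ) :
    HasSum (fun Δ : ℕ ↦ s ^ c * μ ^ Δ / Δ ! *
        ∑ k ∈ range (c + 1), (c.choose k : ℝ) * (Δ.choose (c - k) : ℝ) * x ^ k)
      (Real.exp μ * ∑ k ∈ range (c + 1),
        (c.choose k : ℝ) * (s * x) ^ k * ((s * μ) ^ (c - k) / (c - k)!)) := by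
  have hsplit : ∀ Δ : ℕ, s ^ c * μ ^ Δ / Δ ! *
      ∑ k ∈ range (c + 1), (c.choose k : ℝ) * (Δ.choose (c - k) : ℝ) * x ^ k =
      ∑ k ∈ range (c + 1),
        s ^ c * c.choose k * x ^ k * ((Δ.choose (c - k) : ℝ) * μ ^ Δ / Δ !) := by
    intro Δ
    rw [mul_sum]
    exact sum_congr rfl fun k _ ↦ by ring
  have hvalue : Real.exp μ * ∑ k ∈ range (c + 1),
        (c.choose k : ℝ) * (s * x) ^ k * ((s * μ) ^ (c - k) / (c - k)!) =
      ∑ k ∈ range (c + 1),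
        s ^ c * c.choose k * x ^ k * (μ ^ (c - k) / (c - k)! * Real.exp μ) := by
    rw [mul_sum]
    refine sum_congr rfl fun k hk ↦ ?_
    rw [← Nat.sub_add_cancel (Nat.lt_succ_iff.1 (mem_range.1 hk))]
    simp only [Nat.add_sub_cancel, mul_pow, pow_add]
    ring
  simp only [hsplit, hvalue]
  exact hasSum_sum fun k _ ↦ (Real.hasSum_choose_mul_pow_div_factorial μ (c - k)).mul_left _

theorem stmt_11_general (lam s x : ℝ) (hs1 : 0 < s)
    (hx : 0 ≤ x) (hsx : s * x < 1) :
    (1 / (1 - s * x)) * Real.exp (lam * s ^ 2 * (1 - s) * (x - 1) / (1 - s * x)) =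
      ∑' c : ℕ, ∑' Δ : ℕ,
        Real.exp (-(lam * (1 - s))) * s ^ c * (lam * (1 - s) ^ 2) ^ Δ / (Nat.factorial Δ) *
          ∑ k ∈ Finset.range (c + 1),
            (c.choose k : ℝ) * (Δ.choose (c - k) : ℝ) * x ^ k := by
  set A := Real.exp (-(lam * (1 - s)))
  set μ := lam * (1 - s) ^ 2
  have hsx0 : 0 ≤ s * x := mul_nonneg hs1.le hx
  have ht : ‖s * x‖ < 1 := by rwa [Real.norm_of_nonneg hsx0]
  have hexponent : lam * s ^ 2 * (1 - s) * (x - 1) / (1 - s * x) =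
      -(lam * (1 - s)) + μ + s * μ / (1 - s * x) := by
    field_simp [(sub_pos.2 hsx).ne']
    ring
  have hinner : ∀ c : ℕ, HasSum (fun Δ : ℕ ↦ A * s ^ c * μ ^ Δ / Δ ! *
        ∑ k ∈ range (c + 1), (c.choose k : ℝ) * (Δ.choose (c - k) : ℝ) * x ^ k)
      (A * (Real.exp μ * ∑ k ∈ range (c + 1),
        (c.choose k : ℝ) * (s * x) ^ k * ((s * μ) ^ (c - k) / (c - k)!))) := fun c ↦
    ((hasSum_pow_mul_pow_div_factorial_mul_sum_choose_mul_choose s μ x c).mul_left A).congr_fun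
      fun Δ ↦ by ring
  rw [tsum_congr fun c ↦ (hinner c).tsum_eq, tsum_mul_left, tsum_mul_left,
    (hasSum_sum_choose_mul_pow_mul_pow_div_factorial ht (s * μ)).tsum_eq, hexponent,
    Real.exp_add, Real.exp_add]
  ring

/-- Series representation of `f(x) = (1-sx)⁻¹ exp(κ(1-s)(x-1)/(1-sx))` with `κ = λs²`. -/
theorem stmt_11 (lam s x : ℝ) (hlam : 0 < lam) (hs1 : 0 < s) (hs2 : s < 1)
    (hx : 0 ≤ x) (hsx : s * x < 1) :
    (1 / (1 - s * x)) * Real.exp (lam * s ^ 2 * (1 - s) * (x - 1) / (1 - s * x)) =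
      ∑' c : ℕ, ∑' Δ : ℕ,
        Real.exp (-(lam * (1 - s))) * s ^ c * (lam * (1 - s) ^ 2) ^ Δ / (Nat.factorial Δ) *
          ∑ k ∈ Finset.range (c + 1),
            (c.choose k : ℝ) * (Δ.choose (c - k) : ℝ) * x ^ k :=
  stmt_11_general lam s x hs1 hx hsx
end

section
/- Fix κ < 1. Then for λ sufficiently large (equivalently s = √(κ/λ) sufficiently small), the sequence defined by V₀ = 1 and V_{d} ≤ f(V_{d−1}) with f(x) = (1/(1−sx))·exp(κ(1−s)(x−1)/(1−sx)), satisfies limsup_d V_d < ∞; specifically V_d − 1 ≤ (s + Cs²)·Σ_{i=0}^{d−1} (κ+ε)^i for suitable constants C and ε with κ + ε < 1. -/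
/-!
Since `exp t ≤ 1 / (1 - t)` on `[0, 1)`, `f (1 + y) ≤ 1 / (1 - s - (s + κ (1 - s)) y)`. When
`s ≤ (1 - κ)² / 1000` and `0 ≤ y = O(s)`, this is at most `1 + (s + 13 s²) + (κ + ε) y` with
`ε = (1 - κ) / 2`: the `s²`-terms are absorbed by `C = 13`, and the terms linear in `y` by the
gap `ε y`. Hence `y_d = V_d - 1` satisfies an affine recursion with contraction factor
`κ + ε < 1` as long as it stays below the fixed point `(s + 13 s²) / (1 - κ - ε)`, which it then
never leaves; unrolling the recursion gives the geometric-sum bound.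
-/

open Finset Real

lemma one_div_mul_exp_div_le {D t : ℝ} (ht : 0 ≤ t) (htD : t < D) :
    1 / D * exp (t / D) ≤ 1 / (D - t) := by
  have hD : 0 < D := ht.trans_lt htD
  calc 1 / D * exp (t / D) ≤ 1 / D * (1 / (1 - t / D)) := by
        gcongr
        exact exp_bound_div_one_sub_of_interval (by positivity) ((div_lt_one hD).2 htD)
    _ = 1 / (D - t) := by field_simp

lemma geom_sum_range_le_one_div {r : ℝ} (hr0 : 0 ≤ r) (hr1 : r < 1) (n : ℕ) :
    ∑ i ∈ range n, r ^ i ≤ 1 / (1 - r) := by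
  have := geom_sum_Ico_le_of_lt_one (m := 0) (n := n) hr0 hr1
  rwa [← range_eq_Ico, pow_zero] at this

/-- The affine recursion `a (n + 1) ≤ b + r * a n` only needs to hold below its fixed point. -/
lemma le_mul_geom_sum_of_le_add_mul {a : ℕ → ℝ} {b r : ℝ} (hb : 0 ≤ b) (hr0 : 0 ≤ r)
    (hr1 : r < 1) (h0 : a 0 ≤ 0) (hstep : ∀ n, a n ≤ b / (1 - r) → a (n + 1) ≤ b + r * a n)
    (n : ℕ) : a n ≤ b * ∑ i ∈ range n, r ^ i := by
  induction n with
  | zero => simpa using h0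
  | succ n ih =>
    have hbound : a n ≤ b / (1 - r) := by
      calc a n ≤ b * ∑ i ∈ range n, r ^ i := ih
        _ ≤ b * (1 / (1 - r)) := by gcongr; exact geom_sum_range_le_one_div hr0 hr1 n
        _ = b / (1 - r) := by ring
    calc a (n + 1) ≤ b + r * a n := hstep n hbound
      _ ≤ b + r * (b * ∑ i ∈ range n, r ^ i) := by gcongr
      _ = b * ∑ i ∈ range (n + 1), r ^ i := by rw [geom_sum_succ]; ring

lemma one_div_le_affine_of_small {κ s y : ℝ} (hκ0 : 0 ≤ κ) (hκ1 : κ < 1) (hs0 : 0 ≤ s)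
    (hs : s ≤ (1 - κ) ^ 2 / 1000) (hy0 : 0 ≤ y) (hy : y ≤ 2 * (s + 13 * s ^ 2) / (1 - κ)) :
    0 < 1 - s * (1 + y) - κ * (1 - s) * y ∧
      1 / (1 - s * (1 + y) - κ * (1 - s) * y) ≤ 1 + (s + 13 * s ^ 2) + (κ + (1 - κ) / 2) * y := by
  have h1κ : 0 < 1 - κ := by linarith
  have hs1 : s ≤ (1 - κ) / 1000 := by
    calc s ≤ (1 - κ) ^ 2 / 1000 := hs
      _ ≤ (1 - κ) / 1000 := by nlinarith
  have hb : s + 13 * s ^ 2 ≤ 3 / 2 * s := by nlinarith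
  have hy1 : y ≤ (1 - κ) / 300 := by
    calc y ≤ 2 * (s + 13 * s ^ 2) / (1 - κ) := hy
      _ ≤ 3 * ((1 - κ) ^ 2 / 1000) / (1 - κ) := by gcongr ?_ / _; linarith
      _ ≤ (1 - κ) / 300 := by rw [div_le_iff₀ h1κ]; nlinarith
  set q := s + κ * (1 - s)
  have hq0 : 0 ≤ q := by nlinarith
  have hq1 : q ≤ 1 := by nlinarith
  have hD : 1 - s * (1 + y) - κ * (1 - s) * y = 1 - s - q * y := by ring
  set b := s + 13 * s ^ 2
  set r := κ + (1 - κ) / 2 with hr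
  have hcoef : 0 ≤ (1 - κ) / 2 * (1 - s) - s - b * q - r * q * y := by
    have hbq : b * q ≤ 3 / 2 * s := by nlinarith
    have hrqy : r * q * y ≤ y := by
      have : r * q ≤ 1 := mul_le_one₀ (by linarith) hq0 hq1
      nlinarith
    nlinarith
  have hprod : 1 ≤ (1 + b + r * y) * (1 - s - q * y) := by
    have hexpand : (1 + b + r * y) * (1 - s - q * y) =
        1 + 12 * s ^ 2 - 13 * s ^ 3 + y * ((1 - κ) / 2 * (1 - s) - s - b * q - r * q * y) := by
      ring
    nlinarith [mul_nonneg hy0 hcoef]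
  rw [hD]
  have hpos : 0 < 1 - s - q * y := by nlinarith
  exact ⟨hpos, by rw [div_le_iff₀ hpos]; linarith⟩

noncomputable def recursionMap (κ s x : ℝ) : ℝ :=
  1 / (1 - s * x) * exp (κ * (1 - s) * (x - 1) / (1 - s * x))

lemma recursionMap_le_affine {κ s x : ℝ} (hκ0 : 0 ≤ κ) (hκ1 : κ < 1) (hs0 : 0 ≤ s)
    (hs : s ≤ (1 - κ) ^ 2 / 1000) (hx : 1 ≤ x) (hxM : x - 1 ≤ 2 * (s + 13 * s ^ 2) / (1 - κ)) :
    recursionMap κ s x ≤ 1 + (s + 13 * s ^ 2) + (κ + (1 - κ) / 2) * (x - 1) := by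
  obtain ⟨hpos, hle⟩ := one_div_le_affine_of_small hκ0 hκ1 hs0 hs (sub_nonneg.2 hx) hxM
  rw [add_sub_cancel] at hpos hle
  have hs1 : s ≤ 1 := by nlinarith
  have ht : 0 ≤ κ * (1 - s) * (x - 1) := by
    have := sub_nonneg.2 hx
    have := sub_nonneg.2 hs1
    positivity
  calc recursionMap κ s x ≤ 1 / (1 - s * x - κ * (1 - s) * (x - 1)) :=
        one_div_mul_exp_div_le ht (by linarith)
    _ ≤ _ := hle

/-- For fixed `κ < 1` and `s` small enough, any sequence with `V₀ = 1`, `V_d ≥ 1` and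
`V_{d+1} ≤ f(V_d)` satisfies `V_d - 1 ≤ (s + Cs²) Σ_{i<d} (κ+ε)^i`, hence is bounded. -/
theorem stmt_12 (κ : ℝ) (hκ0 : 0 < κ) (hκ1 : κ < 1) :
    ∃ ε C : ℝ, 0 < ε ∧ κ + ε < 1 ∧ 0 < C ∧
      ∃ s0 : ℝ, 0 < s0 ∧ ∀ s : ℝ, 0 < s → s < s0 →
        ∀ V : ℕ → ℝ, V 0 = 1 → (∀ d, 1 ≤ V d) →
          (∀ d, V (d + 1) ≤
            (1 / (1 - s * V d)) * Real.exp (κ * (1 - s) * (V d - 1) / (1 - s * V d))) →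
          (∀ d, V d - 1 ≤ (s + C * s ^ 2) * ∑ i ∈ Finset.range d, (κ + ε) ^ i) ∧
          (∃ B : ℝ, ∀ d, V d ≤ B) := by
  refine ⟨(1 - κ) / 2, 13, by linarith, by linarith, by norm_num, (1 - κ) ^ 2 / 1000,
    by nlinarith, fun s hs hss0 V hV0 hV1 hVf => ?_⟩
  set b := s + 13 * s ^ 2
  set r := κ + (1 - κ) / 2 with hr
  have hb0 : 0 ≤ b := by positivity
  have hr0 : 0 ≤ r := by linarith
  have hr1 : r < 1 := by linarith
  have hfix : b / (1 - r) = 2 * b / (1 - κ) := by rw [hr]; field_simp; ring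
  have hmain : ∀ d, V d - 1 ≤ b * ∑ i ∈ range d, r ^ i :=
    le_mul_geom_sum_of_le_add_mul (a := fun d => V d - 1) hb0 hr0 hr1 (by simp [hV0])
      fun n hn => by
        have := (hVf n).trans
          (recursionMap_le_affine hκ0.le hκ1 hs.le hss0.le (hV1 n) (hfix ▸ hn))
        show V (n + 1) - 1 ≤ b + r * (V n - 1)
        rw [hr]
        linarith
  refine ⟨hmain, 1 + b * (1 / (1 - r)), fun d => ?_⟩
  linarith [hmain d, mul_le_mul_of_nonneg_left (geom_sum_range_le_one_div hr0 hr1 d) hb0]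
end
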